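/- arXiv:2209.06072 — 5 statements merged into one kernel-verified Lean document; each statement's English description precedes it below -/
import Mathlib

section
/- The spherical derivative is a real derivation on powers relative to the spherical value: for every m, n ≥ 0 and non-real quaternion x, writing (x^m)'_s for the spherical derivative ((x^m - x̄^m)(x - x̄)^{-1}) and (x^m)°_s for the spherical value (x^m + x̄^m)/2, one has (x^{m+n})'_s = (x^m)'_s (x^n)°_s + (x^m)°_s (x^n)'_s. -/
open Quaternion

/-- Leibniz formula for spherical derivatives of powers: with
`(x^m)'ₛ = (x^m - x̄^m)(x - x̄)⁻¹` and `(x^m)°ₛ = (x^m + x̄^m)/2`, one has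
`(x^(m+n))'ₛ = (x^m)'ₛ (x^n)°ₛ + (x^m)°ₛ (x^n)'ₛ` for non-real `x`. -/
theorem sphericalDeriv_pow_leibniz (m n : ℕ) (x : Quaternion ℝ) (hx : x.im ≠ 0) :
    (x ^ (m + n) - (star x) ^ (m + n)) * (x - star x)⁻¹ =
      (x ^ m - (star x) ^ m) * (x - star x)⁻¹ * ((x ^ n + (star x) ^ n) / 2) +
        (x ^ m + (star x) ^ m) / 2 * ((x ^ n - (star x) ^ n) * (x - star x)⁻¹) := by
  set r : ℝ := Real.sqrt (normSq x.im) with hr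
  have hns : 0 < normSq x.im := by
    have h0 : normSq x.im ≠ 0 := normSq_ne_zero.2 hx
    have h1 : 0 ≤ normSq x.im := by
      rw [Quaternion.normSq_def']; positivity
    exact lt_of_le_of_ne h1 (Ne.symm h0)
  have hr0 : r ≠ 0 := by positivity
  have hr2 : r ^ 2 = normSq x.im := Real.sq_sqrt hns.le
  set q : Quaternion ℝ := r⁻¹ • x.im with hq
  have hqq : q * q = -1 := by
    rw [hq, smul_mul_smul_comm, ← sq, ← sq, Quaternion.im_sq]
    rw [← Quaternion.coe_neg, ← Quaternion.coe_smul]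
    rw [inv_pow, smul_neg, smul_eq_mul, ← hr2]
    field_simp
    simp
  set φ := Complex.liftAux q hqq with hφ
  set z : ℂ := ⟨x.re, r⟩ with hz
  have hzim : z.im = r := rfl
  have hxz : φ z = x := by
    show algebraMap ℝ (Quaternion ℝ) z.re + z.im • q = x
    rw [hzim, hq, smul_smul, mul_inv_cancel₀ hr0, one_smul]
    show ((x.re : ℝ) : Quaternion ℝ) + x.im = x
    exact Quaternion.re_add_im x
  have hsxz : φ (starRingEnd ℂ z) = star x := by
    have hst : star x = (x.re : Quaternion ℝ) - x.im := by
      conv_lhs => rw [← Quaternion.re_add_im (star x)]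
      rw [Quaternion.re_star, Quaternion.im_star, sub_eq_add_neg]
    show algebraMap ℝ (Quaternion ℝ) (starRingEnd ℂ z).re + (starRingEnd ℂ z).im • q = star x
    rw [Complex.conj_re, Complex.conj_im, hzim, neg_smul, hq, smul_smul,
      mul_inv_cancel₀ hr0, one_smul, hst]
    show ((x.re : ℝ) : Quaternion ℝ) + -x.im = _
    rw [sub_eq_add_neg]
  have hinj : ∀ a : ℂ, φ a⁻¹ = (φ a)⁻¹ := fun a => map_inv₀ (φ : ℂ →+* Quaternion ℝ) a
  have h2 : (2 : Quaternion ℝ) = φ 2 := (map_ofNat φ 2).symm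
  rw [← hsxz, ← hxz, h2]
  simp only [← map_pow φ, ← map_sub φ, ← hinj, ← map_add φ, ← map_mul φ, ← map_div₀ φ]
  congr 1
  have hzne : z - starRingEnd ℂ z ≠ 0 := by
    rw [sub_ne_zero]
    intro h
    have h' := congrArg Complex.im h
    simp [Complex.conj_im, hzim] at h'
    exact hr0 (by linarith)
  field_simp
  ring
end

section
/- Two-step Almansi for monomials in two quaternionic variables: for all a, b ∈ ℕ with a, b ≥ 1 and all non-real quaternions x₁ = α₁ + J₁β₁, x₂ = α₂ + J₂β₂, the monomial x₁^a x₂^b decomposes as x₁^a x₂^b = h₁₁ - x̄₁ h₀₁ - h₁₀ x̄₂ + x̄₁ h₀₀ x̄₂, where h_{εδ} := D_{a-1+ε}(x₁) D_{b-1+δ}(x₂) for ε, δ ∈ {0,1}, and D_m(α+Jβ) := ((α+Jβ)^{m+1} - (α-Jβ)^{m+1})(2Jβ)^{-1} is real-valued. -/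
open Quaternion

lemma qcomm (α β : ℝ) (J : Quaternion ℝ) :
    Commute ((α : Quaternion ℝ) - J * β) ((α : Quaternion ℝ) + J * β) := by
  have h0 : Commute ((α:Quaternion ℝ)) (J * (β:Quaternion ℝ)) := Quaternion.coe_commute α _
  have h1 : Commute ((α:Quaternion ℝ)) ((α:Quaternion ℝ) + J * β) :=
    (Commute.refl _).add_right h0
  have h2 : Commute (J * (β:Quaternion ℝ)) ((α:Quaternion ℝ) + J * β) :=
    (h0.symm).add_right (Commute.refl _)
  exact h1.sub_left h2

lemma qcomm2 (α β : ℝ) (J : Quaternion ℝ) :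
    Commute ((α : Quaternion ℝ) - J * β) (2 * (J * β)) := by
  have h0 : Commute ((α:Quaternion ℝ)) (J * (β:Quaternion ℝ)) := Quaternion.coe_commute α _
  have h2 : Commute ((α:Quaternion ℝ) - J * β) (J * (β:Quaternion ℝ)) :=
    h0.sub_left (Commute.refl _)
  exact (Commute.ofNat_right _ 2).mul_right h2

lemma une_zero (β : ℝ) (J : Quaternion ℝ) (hJ : J ^ 2 = -1) (hβ : β ≠ 0) :
    (2 * (J * (β:Quaternion ℝ))) ≠ 0 := by
  have hJ0 : J ≠ 0 := by rintro rfl; simp at hJ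
  have hb : ((β:Quaternion ℝ)) ≠ 0 := by
    simpa using (Quaternion.coe_injective.ne hβ)
  have h2 : (2 : Quaternion ℝ) ≠ 0 := by
    have h3 : ((2:ℝ) : Quaternion ℝ) ≠ 0 := by
      simpa using Quaternion.coe_injective.ne (two_ne_zero (α := ℝ))
    exact fun h => by have := congrArg (fun q : Quaternion ℝ => q.re) h; change (2:ℝ) = 0 at this; norm_num at this
  exact mul_ne_zero h2 (mul_ne_zero hJ0 hb)

lemma one_var_left (α β : ℝ) (J : Quaternion ℝ) (hJ : J ^ 2 = -1) (hβ : β ≠ 0)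
    (a : ℕ) (ha : 1 ≤ a) :
    (((α:Quaternion ℝ) + J * β) ^ (a + 1) - ((α:Quaternion ℝ) - J * β) ^ (a + 1)) *
        (2 * (J * β))⁻¹ -
      ((α:Quaternion ℝ) - J * β) *
        ((((α:Quaternion ℝ) + J * β) ^ (a - 1 + 1) -
          ((α:Quaternion ℝ) - J * β) ^ (a - 1 + 1)) * (2 * (J * β))⁻¹) =
      ((α:Quaternion ℝ) + J * β) ^ a := by
  set x : Quaternion ℝ := (α:Quaternion ℝ) + J * β with hx
  set y : Quaternion ℝ := (α:Quaternion ℝ) - J * β with hy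
  set u : Quaternion ℝ := 2 * (J * β) with hu
  rw [Nat.sub_add_cancel ha]
  have hu0 : u ≠ 0 := une_zero β J hJ hβ
  have hxy : Commute y x := qcomm α β J
  have hxmy : x - y = u := by rw [hx, hy, hu, two_mul]; noncomm_ring
  have h1 : y * x ^ a = x ^ a * y := (hxy.pow_right a).eq
  have key : x ^ (a+1) - y ^ (a+1) - y * (x ^ a - y ^ a) = x ^ a * u := by
    rw [← hxmy, pow_succ x, pow_succ' y, mul_sub y, h1, mul_sub (x ^ a) x y]
    abel
  calc (x ^ (a+1) - y ^ (a+1)) * u⁻¹ - y * ((x ^ a - y ^ a) * u⁻¹)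
      = (x ^ (a+1) - y ^ (a+1) - y * (x ^ a - y ^ a)) * u⁻¹ := by noncomm_ring
    _ = x ^ a * u * u⁻¹ := by rw [key]
    _ = x ^ a := by rw [mul_assoc, mul_inv_cancel₀ hu0, mul_one]

lemma one_var_right (α β : ℝ) (J : Quaternion ℝ) (hJ : J ^ 2 = -1) (hβ : β ≠ 0)
    (b : ℕ) (hb : 1 ≤ b) :
    (((α:Quaternion ℝ) + J * β) ^ (b + 1) - ((α:Quaternion ℝ) - J * β) ^ (b + 1)) *
        (2 * (J * β))⁻¹ -
      ((((α:Quaternion ℝ) + J * β) ^ (b - 1 + 1) -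
          ((α:Quaternion ℝ) - J * β) ^ (b - 1 + 1)) * (2 * (J * β))⁻¹) *
        ((α:Quaternion ℝ) - J * β) =
      ((α:Quaternion ℝ) + J * β) ^ b := by
  have hxy : Commute ((α:Quaternion ℝ) - J * β) ((α:Quaternion ℝ) + J * β) := qcomm α β J
  have hcu : Commute ((α:Quaternion ℝ) - J * β) ((2 * (J * (β:Quaternion ℝ)))⁻¹) :=
    (qcomm2 α β J).inv_right₀
  have hcD : Commute ((α:Quaternion ℝ) - J * β)
      ((((α:Quaternion ℝ) + J * β) ^ (b - 1 + 1) -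
        ((α:Quaternion ℝ) - J * β) ^ (b - 1 + 1)) * (2 * (J * β))⁻¹) :=
    ((hxy.pow_right _).sub_right ((Commute.refl _).pow_right _)).mul_right hcu
  rw [← hcD.eq]
  exact one_var_left α β J hJ hβ b hb

/-- Two-step Almansi decomposition for a monomial `x₁^a x₂^b` in two non-real
quaternionic variables, with `D m x := (x^(m+1) - x̄^(m+1))(2Jβ)⁻¹`. -/
theorem almansi_two_variables (a b : ℕ) (ha : 1 ≤ a) (hb : 1 ≤ b)
    (α₁ β₁ α₂ β₂ : ℝ) (J₁ J₂ : Quaternion ℝ)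
    (hJ₁ : J₁ ^ 2 = -1) (hJ₂ : J₂ ^ 2 = -1) (hβ₁ : β₁ ≠ 0) (hβ₂ : β₂ ≠ 0) :
    letI x₁ : Quaternion ℝ := (α₁ : Quaternion ℝ) + J₁ * β₁
    letI x₂ : Quaternion ℝ := (α₂ : Quaternion ℝ) + J₂ * β₂
    letI xb₁ : Quaternion ℝ := (α₁ : Quaternion ℝ) - J₁ * β₁
    letI xb₂ : Quaternion ℝ := (α₂ : Quaternion ℝ) - J₂ * β₂
    letI D₁ : ℕ → Quaternion ℝ := fun k => (x₁ ^ (k + 1) - xb₁ ^ (k + 1)) * (2 * (J₁ * β₁))⁻¹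
    letI D₂ : ℕ → Quaternion ℝ := fun k => (x₂ ^ (k + 1) - xb₂ ^ (k + 1)) * (2 * (J₂ * β₂))⁻¹
    x₁ ^ a * x₂ ^ b =
      D₁ a * D₂ b - xb₁ * (D₁ (a - 1) * D₂ b) - D₁ a * D₂ (b - 1) * xb₂ +
        xb₁ * (D₁ (a - 1) * D₂ (b - 1)) * xb₂ := by
  have h1 := one_var_left α₁ β₁ J₁ hJ₁ hβ₁ a ha
  have h2 := one_var_right α₂ β₂ J₂ hJ₂ hβ₂ b hb
  rw [← h1, ← h2]
  noncomm_ring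
end

section
/- Each factor in the two-variable Almansi decomposition of a monomial is separately harmonic: for m ≥ 0 the function D_m : ℍ \ ℝ → ℝ defined by D_m(α + Jβ) = ((α+Jβ)^{m+1} - (α-Jβ)^{m+1})(2Jβ)^{-1} is a harmonic function of (α, β, γ, δ) ∈ ℝ⁴ (writing the quaternion as α + iβ' + jγ + kδ with β = |(β',γ,δ)|). -/
open Quaternion

noncomputable section

/-- Directional derivative of `f : ℍ → ℍ` along `v`. -/
def pderivQ (v : Quaternion ℝ) (f : Quaternion ℝ → Quaternion ℝ) :
    Quaternion ℝ → Quaternion ℝ :=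
  fun x => fderiv ℝ f x v

def qI : Quaternion ℝ := ⟨0, 1, 0, 0⟩
def qJ : Quaternion ℝ := ⟨0, 0, 1, 0⟩
def qK : Quaternion ℝ := ⟨0, 0, 0, 1⟩

/-- The Cauchy–Riemann–Fueter operator `∂̄ = (1/2)(∂_α + i ∂_β + j ∂_γ + k ∂_δ)`. -/
def CRFbar (f : Quaternion ℝ → Quaternion ℝ) : Quaternion ℝ → Quaternion ℝ :=
  fun x => (2 : ℝ)⁻¹ •
    (pderivQ 1 f x + qI * pderivQ qI f x + qJ * pderivQ qJ f x + qK * pderivQ qK f x)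

/-- The four-dimensional Laplacian, acting componentwise on `ℍ ≅ ℝ⁴`-valued functions. -/
def laplacianQ (f : Quaternion ℝ → Quaternion ℝ) : Quaternion ℝ → Quaternion ℝ :=
  fun x => pderivQ 1 (pderivQ 1 f) x + pderivQ qI (pderivQ qI f) x +
    pderivQ qJ (pderivQ qJ f) x + pderivQ qK (pderivQ qK f) x

abbrev Hq := Quaternion ℝ

open MvPolynomial

def Pg : ℕ → MvPolynomial (Fin 2) ℝ
  | 0 => 1
  | 1 => 2 * X 0
  | (m+2) => 2 * X 0 * Pg (m+1) - (X 0 * X 0 + X 1) * Pg m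

lemma Pg_succ_succ (m : ℕ) : Pg (m+2) = 2 * X 0 * Pg (m+1) - (X 0 * X 0 + X 1) * Pg m := rfl

lemma pderiv_two (i : Fin 2) : pderiv i (2 : MvPolynomial (Fin 2) ℝ) = 0 := by
  have h : (2 : MvPolynomial (Fin 2) ℝ) = C (2 : ℝ) := by simp [map_ofNat]
  rw [h, pderiv_C]

lemma pderiv_natC (i : Fin 2) (n : ℕ) : pderiv i (n : MvPolynomial (Fin 2) ℝ) = 0 := by
  have h : ((n : ℕ) : MvPolynomial (Fin 2) ℝ) = C ((n : ℕ) : ℝ) := by simp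
  rw [h, pderiv_C]

lemma X1_ne_X0 : (1 : Fin 2) ≠ 0 := by decide
lemma X0_ne_X1 : (0 : Fin 2) ≠ 1 := by decide

lemma Pg_D (m : ℕ) : pderiv 0 (Pg (m+1)) = ((m : MvPolynomial (Fin 2) ℝ) + 2) * Pg m := by
  induction m using Nat.strong_induction_on with
  | _ m ih =>
    match m with
    | 0 =>
      show pderiv 0 (2 * X 0) = _
      simp [pderiv_mul, pderiv_X_self, pderiv_two, Pg]
    | 1 =>
      rw [show Pg (1+1) = 2 * X 0 * Pg 1 - (X 0 * X 0 + X 1) * Pg 0 from rfl,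
        show Pg 1 = 2 * X 0 from rfl, show Pg 0 = 1 from rfl]
      simp only [map_sub, pderiv_mul, map_add, pderiv_X_self, pderiv_X_of_ne X1_ne_X0,
        pderiv_two, pderiv_one]
      push_cast
      ring
    | (m+2) =>
      have h1 : pderiv 0 (Pg (m+2)) = (((m+1 : ℕ) : MvPolynomial (Fin 2) ℝ) + 2) * Pg (m+1) :=
        ih (m+1) (by omega)
      have h0 : pderiv 0 (Pg (m+1)) = ((m : MvPolynomial (Fin 2) ℝ) + 2) * Pg m := ih m (by omega)
      rw [show Pg (m+2+1) = 2 * X 0 * Pg (m+2) - (X 0 * X 0 + X 1) * Pg (m+1) from rfl]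
      simp only [map_sub, pderiv_mul, map_add, pderiv_X_self, pderiv_X_of_ne X1_ne_X0,
        pderiv_two, h1, h0]
      rw [Pg_succ_succ m]
      push_cast
      ring

/-- Euler identity: Pg m is homogeneous of degree m with weights (1,2). -/
lemma Pg_E (m : ℕ) : X 0 * pderiv 0 (Pg m) + 2 * X 1 * pderiv 1 (Pg m)
    = (m : MvPolynomial (Fin 2) ℝ) * Pg m := by
  induction m using Nat.strong_induction_on with
  | _ m ih =>
    match m with
    | 0 => simp [Pg, pderiv_one]
    | 1 =>
      rw [show Pg 1 = 2 * X 0 from rfl]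
      simp only [pderiv_mul, pderiv_X_self, pderiv_X_of_ne X1_ne_X0, pderiv_X_of_ne X0_ne_X1,
        pderiv_two]
      push_cast
      ring
    | (m+2) =>
      have h1 := ih (m+1) (by omega)
      have h0 := ih m (by omega)
      rw [Pg_succ_succ m]
      simp only [map_sub, pderiv_mul, map_add, pderiv_X_self, pderiv_X_of_ne X1_ne_X0,
        pderiv_X_of_ne X0_ne_X1, pderiv_two]
      push_cast
      push_cast at h1 h0
      linear_combination (2 * X 0 : MvPolynomial (Fin 2) ℝ) * h1
        - (X 0 * X 0 + X 1) * h0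

/-- The harmonicity identity. -/
lemma Pg_L (m : ℕ) : pderiv 0 (pderiv 0 (Pg m)) + 4 * X 1 * pderiv 1 (pderiv 1 (Pg m))
    + 6 * pderiv 1 (Pg m) = 0 := by
  induction m using Nat.strong_induction_on with
  | _ m ih =>
    match m with
    | 0 => simp [Pg, pderiv_one]
    | 1 =>
      rw [show Pg 1 = 2 * X 0 from rfl]
      simp [pderiv_mul, pderiv_X_self, pderiv_X_of_ne X1_ne_X0, pderiv_X_of_ne X0_ne_X1,
        pderiv_two]
    | (m+2) =>
      have h1 := ih (m+1) (by omega)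
      have h0 := ih m (by omega)
      have hE := Pg_E m
      have hD : pderiv 0 (Pg (m+1)) = ((m : MvPolynomial (Fin 2) ℝ) + 2) * Pg m := Pg_D m
      rw [Pg_succ_succ m]
      simp only [map_sub, pderiv_mul, map_add, pderiv_X_self, pderiv_X_of_ne X1_ne_X0,
        pderiv_X_of_ne X0_ne_X1, pderiv_two, pderiv_one, pderiv_C, pderiv_natC, map_zero, hD]
      rw [hD] at h1
      simp only [pderiv_mul, pderiv_natC, map_zero, map_add, pderiv_two, zero_mul, mul_zero,
        add_zero, zero_add] at h1
      push_cast at *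
      linear_combination (2 * X 0 : MvPolynomial (Fin 2) ℝ) * h1
        - (X 0 * X 0 + X 1) * h0 - 4 * hE


def sIm (x : Hq) : ℝ := x.imI * x.imI + x.imJ * x.imJ + x.imK * x.imK

def ev (P : MvPolynomial (Fin 2) ℝ) (x : Hq) : ℝ := eval ![x.re, sIm x] P

def reC : Hq →L[ℝ] ℝ := ⟨QuaternionAlgebra.reₗ (-1 : ℝ) (0 : ℝ) (-1 : ℝ), continuous_re⟩
def imIC : Hq →L[ℝ] ℝ := ⟨QuaternionAlgebra.imIₗ (-1 : ℝ) (0 : ℝ) (-1 : ℝ), continuous_imI⟩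
def imJC : Hq →L[ℝ] ℝ := ⟨QuaternionAlgebra.imJₗ (-1 : ℝ) (0 : ℝ) (-1 : ℝ), continuous_imJ⟩
def imKC : Hq →L[ℝ] ℝ := ⟨QuaternionAlgebra.imKₗ (-1 : ℝ) (0 : ℝ) (-1 : ℝ), continuous_imK⟩

@[simp] lemma reC_apply (v : Hq) : reC v = v.re := rfl
@[simp] lemma imIC_apply (v : Hq) : imIC v = v.imI := rfl
@[simp] lemma imJC_apply (v : Hq) : imJC v = v.imJ := rfl
@[simp] lemma imKC_apply (v : Hq) : imKC v = v.imK := rfl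

/-- derivative of `sIm` at `x`. -/
def sC (x : Hq) : Hq →L[ℝ] ℝ :=
  (2 * x.imI) • imIC + (2 * x.imJ) • imJC + (2 * x.imK) • imKC

@[simp] lemma sC_apply (x v : Hq) :
    sC x v = 2 * x.imI * v.imI + 2 * x.imJ * v.imJ + 2 * x.imK * v.imK := by
  simp [sC]

lemma sC_symm (x v : Hq) : sC x v = sC v x := by simp; ring

lemma hasFDerivAt_sIm (x : Hq) : HasFDerivAt sIm (sC x) x := by
  have h : HasFDerivAt (fun y : Hq => y.imI * y.imI + y.imJ * y.imJ + y.imK * y.imK)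
      ((x.imI • imIC + x.imI • imIC) + (x.imJ • imJC + x.imJ • imJC)
        + (x.imK • imKC + x.imK • imKC)) x :=
    ((imIC.hasFDerivAt.mul imIC.hasFDerivAt).add
      (imJC.hasFDerivAt.mul imJC.hasFDerivAt)).add
      (imKC.hasFDerivAt.mul imKC.hasFDerivAt)
  refine h.congr_fderiv ?_
  ext v
  simp [sC]
  ring

def dEv (P : MvPolynomial (Fin 2) ℝ) (x : Hq) : Hq →L[ℝ] ℝ :=
  ev (pderiv 0 P) x • reC + ev (pderiv 1 P) x • sC x

lemma hasFDerivAt_ev (P : MvPolynomial (Fin 2) ℝ) (x : Hq) :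
    HasFDerivAt (fun y => ev P y) (dEv P x) x := by
  induction P using MvPolynomial.induction_on with
  | C a =>
    have h : HasFDerivAt (fun _ : Hq => a) (0 : Hq →L[ℝ] ℝ) x := hasFDerivAt_const a x
    convert h using 1
    · ext y; simp [ev]
    · simp [dEv, pderiv_C, ev]
  | add p q hp hq =>
    have h : HasFDerivAt (fun y => ev p y + ev q y) (dEv p x + dEv q x) x := hp.add hq
    convert h using 1
    · ext y; simp [ev]
    · ext v; simp [dEv, ev]; ring
  | mul_X p i hp =>
    fin_cases i
    · have h : HasFDerivAt (fun y => ev p y * reC y) (ev p x • reC + reC x • dEv p x) x :=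
        hp.mul (reC.hasFDerivAt (x := x))
      convert h using 1
      · ext y; simp [ev]
      · ext v
        simp [dEv, ev, pderiv_mul, pderiv_X_self,
          pderiv_X_of_ne (show (0:Fin 2) ≠ 1 by decide)]
        try ring
    · have h : HasFDerivAt (fun y => ev p y * sIm y) (ev p x • sC x + sIm x • dEv p x) x :=
        hp.mul (hasFDerivAt_sIm x)
      convert h using 1
      · ext y; simp [ev, sIm]; try ring
      · ext v
        simp [dEv, ev, sIm, pderiv_mul, pderiv_X_self,
          pderiv_X_of_ne (show (1:Fin 2) ≠ 0 by decide)]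
        try ring

def coeC : ℝ →L[ℝ] Hq := ⟨Algebra.linearMap ℝ Hq, continuous_coe⟩

@[simp] lemma coeC_apply (r : ℝ) : coeC r = (r : Hq) := rfl

@[simp] lemma dEv_apply (P : MvPolynomial (Fin 2) ℝ) (x v : Hq) :
    dEv P x v = ev (pderiv 0 P) x * v.re + ev (pderiv 1 P) x * sC x v := by
  simp [dEv, sC]
  ring

lemma hasFDerivAt_evQ (P : MvPolynomial (Fin 2) ℝ) (x : Hq) :
    HasFDerivAt (fun y => ((ev P y : ℝ) : Hq)) (coeC.comp (dEv P x)) x :=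
  coeC.hasFDerivAt.comp x (hasFDerivAt_ev P x)

lemma pderivQ_evQ (P : MvPolynomial (Fin 2) ℝ) (e : Hq) :
    pderivQ e (fun y => ((ev P y : ℝ) : Hq))
      = fun x => ((dEv P x e : ℝ) : Hq) := by
  funext x
  show fderiv ℝ _ x e = _
  rw [(hasFDerivAt_evQ P x).fderiv]
  rfl

lemma hasFDerivAt_sC_e (e x : Hq) : HasFDerivAt (fun y => sC y e) (sC e) x := by
  have h : (fun y => sC y e) = ⇑(sC e) := funext fun y => sC_symm y e
  rw [h]
  exact (sC e).hasFDerivAt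

lemma second_deriv_evQ (P : MvPolynomial (Fin 2) ℝ) (e x : Hq) :
    pderivQ e (pderivQ e (fun y => ((ev P y : ℝ) : Hq))) x
      = ((dEv (pderiv 0 P) x e * e.re + dEv (pderiv 1 P) x e * sC x e
          + ev (pderiv 1 P) x * sC e e : ℝ) : Hq) := by
  rw [pderivQ_evQ]
  have h1 : HasFDerivAt (fun y : Hq => dEv P y e)
      (e.re • dEv (pderiv 0 P) x + (sC x e) • dEv (pderiv 1 P) x
        + ev (pderiv 1 P) x • sC e) x := by
    have hmul1 : HasFDerivAt (fun y : Hq => ev (pderiv 0 P) y * e.re)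
        (e.re • dEv (pderiv 0 P) x) x := (hasFDerivAt_ev (pderiv 0 P) x).mul_const e.re
    have hmul2 : HasFDerivAt (fun y : Hq => ev (pderiv 1 P) y * sC y e)
        ((sC x e) • dEv (pderiv 1 P) x + ev (pderiv 1 P) x • sC e) x := by
      have : HasFDerivAt (fun y : Hq => ev (pderiv 1 P) y * sC y e)
          (ev (pderiv 1 P) x • sC e + sC x e • dEv (pderiv 1 P) x) x :=
        (hasFDerivAt_ev (pderiv 1 P) x).mul (hasFDerivAt_sC_e e x)
      convert this using 1
      abel
    have := hmul1.add hmul2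
    refine this.congr_of_eventuallyEq (Filter.Eventually.of_forall fun y => ?_) |>.congr_fderiv ?_
    · simp
    · abel
  have h2 : HasFDerivAt (fun y : Hq => ((dEv P y e : ℝ) : Hq))
      (coeC.comp (e.re • dEv (pderiv 0 P) x + (sC x e) • dEv (pderiv 1 P) x
        + ev (pderiv 1 P) x • sC e)) x := coeC.hasFDerivAt.comp x h1
  show fderiv ℝ _ x e = _
  rw [h2.fderiv]
  show ((((e.re • dEv (pderiv 0 P) x + (sC x e) • dEv (pderiv 1 P) x
      + ev (pderiv 1 P) x • sC e) e : ℝ)) : Hq) = _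
  norm_cast
  simp only [ContinuousLinearMap.add_apply, ContinuousLinearMap.smul_apply, dEv_apply,
    sC_apply, smul_eq_mul]
  ring

def Lop (P : MvPolynomial (Fin 2) ℝ) : MvPolynomial (Fin 2) ℝ :=
  pderiv 0 (pderiv 0 P) + 4 * X 1 * pderiv 1 (pderiv 1 P) + 6 * pderiv 1 P

@[simp] lemma one_re' : (1 : Hq).re = 1 := rfl
@[simp] lemma one_imI' : (1 : Hq).imI = 0 := rfl
@[simp] lemma one_imJ' : (1 : Hq).imJ = 0 := rfl
@[simp] lemma one_imK' : (1 : Hq).imK = 0 := rfl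
@[simp] lemma qI_re : qI.re = 0 := rfl
@[simp] lemma qI_imI : qI.imI = 1 := rfl
@[simp] lemma qI_imJ : qI.imJ = 0 := rfl
@[simp] lemma qI_imK : qI.imK = 0 := rfl
@[simp] lemma qJ_re : qJ.re = 0 := rfl
@[simp] lemma qJ_imI : qJ.imI = 0 := rfl
@[simp] lemma qJ_imJ : qJ.imJ = 1 := rfl
@[simp] lemma qJ_imK : qJ.imK = 0 := rfl
@[simp] lemma qK_re : qK.re = 0 := rfl
@[simp] lemma qK_imI : qK.imI = 0 := rfl
@[simp] lemma qK_imJ : qK.imJ = 0 := rfl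
@[simp] lemma qK_imK : qK.imK = 1 := rfl

lemma laplacianQ_evQ (P : MvPolynomial (Fin 2) ℝ) (x : Hq) :
    laplacianQ (fun y => ((ev P y : ℝ) : Hq)) x = ((ev (Lop P) x : ℝ) : Hq) := by
  show pderivQ 1 (pderivQ 1 _) x + pderivQ qI (pderivQ qI _) x +
      pderivQ qJ (pderivQ qJ _) x + pderivQ qK (pderivQ qK _) x = _
  rw [second_deriv_evQ, second_deriv_evQ, second_deriv_evQ, second_deriv_evQ]
  have hLop : ev (Lop P) x = ev (pderiv 0 (pderiv 0 P)) x
      + 4 * sIm x * ev (pderiv 1 (pderiv 1 P)) x + 6 * ev (pderiv 1 P) x := by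
    simp [Lop, ev]
  rw [hLop]
  norm_cast
  simp only [dEv_apply, sC_apply, one_re', one_imI', one_imJ', one_imK', qI_re, qI_imI,
    qI_imJ, qI_imK, qJ_re, qJ_imI, qJ_imJ, qJ_imK, qK_re, qK_imI, qK_imJ, qK_imK, sIm]
  ring

open Finset in
def Tq (m : ℕ) (y : Hq) : Hq := ∑ k ∈ range (m+1), y^k * (star y)^(m-k)

lemma commute_star_q (y : Hq) : Commute y (star y) := by
  show y * star y = star y * y
  rw [Quaternion.self_mul_star, Quaternion.star_mul_self]

open Finset in
lemma Tq_succ_left (n : ℕ) (y : Hq) : Tq (n+1) y = y * Tq n y + (star y)^(n+1) := by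
  rw [Tq, Finset.sum_range_succ']
  rw [Tq, Finset.mul_sum]
  congr 1
  · refine Finset.sum_congr rfl fun k _ => ?_
    rw [← mul_assoc, ← pow_succ']
    congr 2 <;> omega
  · simp

open Finset in
lemma Tq_succ_right (n : ℕ) (y : Hq) : Tq (n+1) y = star y * Tq n y + y^(n+1) := by
  rw [Tq, Finset.sum_range_succ]
  rw [Tq, Finset.mul_sum]
  congr 1
  · refine Finset.sum_congr rfl fun k hk => ?_
    rw [← mul_assoc, ((commute_star_q y).symm.pow_right k).eq, mul_assoc, ← pow_succ']
    congr 2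
    rw [Finset.mem_range] at hk
    omega
  · simp

lemma Tq_rec (m : ℕ) (y : Hq) :
    Tq (m+2) y = (y + star y) * Tq (m+1) y - (y * star y) * Tq m y := by
  have A1 : Tq (m+2) y = y * Tq (m+1) y + (star y)^(m+2) := Tq_succ_left (m+1) y
  have B1 : Tq (m+2) y = star y * Tq (m+1) y + y^(m+2) := Tq_succ_right (m+1) y
  have B0 : star y * Tq m y = Tq (m+1) y - y^(m+1) := by
    rw [Tq_succ_right m y]; abel
  rw [add_mul, mul_assoc, B0, mul_sub, ← pow_succ', B1]
  abel

lemma Tq_eq_ev (m : ℕ) (y : Hq) : Tq m y = ((ev (Pg m) y : ℝ) : Hq) := by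
  induction m using Nat.strong_induction_on with
  | _ m ih =>
    match m with
    | 0 => simp [Tq, ev, Pg]
    | 1 =>
      rw [Tq, Finset.sum_range_succ, Finset.sum_range_succ, Finset.sum_range_zero]
      have h : ev (Pg 1) y = 2 * y.re := by
        simp [ev, Pg]
      rw [h]
      simp only [zero_add, pow_zero, pow_one, one_mul, mul_one]
      rw [← Quaternion.star_add_self']
      norm_num
    | (m+2) =>
      have h1 : Tq (m+1) y = ((ev (Pg (m+1)) y : ℝ) : Hq) := ih (m+1) (by omega)
      have h0 : Tq m y = ((ev (Pg m) y : ℝ) : Hq) := ih m (by omega)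
      rw [Tq_rec, h1, h0, Quaternion.self_add_star', Quaternion.self_mul_star]
      have hev : ev (Pg (m+2)) y
          = 2 * y.re * ev (Pg (m+1)) y - (y.re * y.re + sIm y) * ev (Pg m) y := by
        simp [ev, Pg_succ_succ]
      have hns : normSq y = y.re * y.re + sIm y := by
        rw [Quaternion.normSq_def', sIm]; ring
      rw [hns, hev]
      norm_cast

lemma laplacianQ_congr {f g : Hq → Hq} {x : Hq} (h : f =ᶠ[nhds x] g) :
    laplacianQ f x = laplacianQ g x := by
  have hf : ∀ v : Hq, pderivQ v f =ᶠ[nhds x] pderivQ v g := by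
    intro v
    exact (h.fderiv (𝕜 := ℝ)).mono fun y hy => by simp only [pderivQ, hy]
  have key : ∀ v : Hq, pderivQ v (pderivQ v f) x = pderivQ v (pderivQ v g) x := by
    intro v
    show fderiv ℝ _ x v = fderiv ℝ _ x v
    rw [(hf v).fderiv_eq]
  show pderivQ 1 (pderivQ 1 f) x + pderivQ qI (pderivQ qI f) x +
      pderivQ qJ (pderivQ qJ f) x + pderivQ qK (pderivQ qK f) x = _
  rw [key 1, key qI, key qJ, key qK]
  rfl

open Finset in
/-- The spherical derivative `D_m` of `x ↦ x^(m+1)` is harmonic off the real axis. -/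
theorem sphericalDeriv_pow_harmonic (m : ℕ) :
    ∀ x : Quaternion ℝ, x.im ≠ 0 →
      laplacianQ (fun y => (y ^ (m + 1) - (star y) ^ (m + 1)) * (y - star y)⁻¹) x = 0 := by
  intro x hx
  have hopen : IsOpen {y : Hq | y.im ≠ 0} := by
    have hcl : IsClosed {y : Hq | y.im = 0} := isClosed_eq continuous_im continuous_const
    have : {y : Hq | y.im ≠ 0} = {y : Hq | y.im = 0}ᶜ := rfl
    rw [this]
    exact hcl.isOpen_compl
  have hev : (fun y : Hq => (y ^ (m + 1) - (star y) ^ (m + 1)) * (y - star y)⁻¹)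
      =ᶠ[nhds x] (fun y => ((ev (Pg m) y : ℝ) : Hq)) := by
    filter_upwards [hopen.mem_nhds hx] with y hy
    have hy0 : y - star y ≠ 0 := by
      intro h
      apply hy
      have hstar : star y = y := (sub_eq_zero.mp h).symm
      have : y = (y.re : Hq) := Quaternion.star_eq_self.mp hstar
      rw [this]
      simp
    have hc : Commute y (star y) := commute_star_q y
    have hg := hc.geom_sum₂_mul (m+1)
    rw [← hg, mul_assoc, mul_inv_cancel₀ hy0, mul_one]
    rw [← Tq_eq_ev]
    rw [Tq]
    refine Finset.sum_congr rfl fun k _ => ?_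
    congr 2 <;> omega
  rw [laplacianQ_congr hev, laplacianQ_evQ]
  have hL : Lop (Pg m) = 0 := by
    rw [Lop, Pg_L m]
  rw [hL]
  simp [ev]

end
end

section
/- The spherical derivative of x^m equals the normalized zonal harmonic: for every m ≥ 1 and x ∈ ℍ with |x| ≤ 1, (x^m)'_s = Z_{m-1}(x,1)/m, where Z_k(·,1) is the real-valued zonal harmonic of degree k in ℝ⁴ with pole 1; in particular (x^m)'_s restricted to the unit sphere S³ ⊂ ℝ⁴, as a function of x, is a spherical harmonic of degree m-1. -/
open Quaternion Polynomial

noncomputable section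

/-- The real-valued zonal harmonic of degree `k` of `ℝ⁴ ≅ ℍ` with pole `1`,
given by its classical closed form `Z_k(x,1) = (k+1) |x|^k U_k(Re x / |x|)`,
where `U_k` is the Chebyshev polynomial of the second kind. -/
def zonalHarmonic4 (k : ℕ) (x : Quaternion ℝ) : ℝ :=
  (k + 1) * ‖x‖ ^ k * (Chebyshev.U ℝ (k : ℤ)).eval (x.re / ‖x‖)

lemma key_aux (x : Quaternion ℝ) (hx : x ≠ 0) (k : ℕ) :
    x ^ (k + 1) - (star x) ^ (k + 1) =
      ((‖x‖ ^ k * (Chebyshev.U ℝ (k : ℤ)).eval (x.re / ‖x‖) : ℝ) : Quaternion ℝ)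
        * (x - star x) := by
  have hr : (‖x‖ : ℝ) ≠ 0 := norm_ne_zero_iff.mpr hx
  induction k using Nat.twoStepInduction with
  | zero => simp [Chebyshev.U_zero]
  | one =>
    have h2 : ((2 * x.re : ℝ) : Quaternion ℝ) * (x - star x) = x ^ 2 - (star x) ^ 2 := by
      rw [← self_add_star', add_mul, mul_sub, mul_sub, sq, sq, star_comm_self']
      abel
    rw [show ((1:ℕ) : ℤ) = 1 by norm_num, Chebyshev.U_one]
    simp only [eval_mul, eval_ofNat, eval_X, pow_one]
    rw [show ‖x‖ * (2 * (x.re / ‖x‖)) = 2 * x.re by field_simp, h2]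
  | more k ih2 ih1 =>
    have hU : Chebyshev.U ℝ ((k:ℤ) + 2) = 2 * X * Chebyshev.U ℝ ((k:ℤ) + 1) -
        Chebyshev.U ℝ (k:ℤ) := Chebyshev.U_add_two ℝ k
    have hrec : x ^ (k + 2 + 1) - (star x) ^ (k + 2 + 1) =
        ((2 * x.re : ℝ) : Quaternion ℝ) * (x ^ (k + 1 + 1) - (star x) ^ (k + 1 + 1)) -
          ((normSq x : ℝ) : Quaternion ℝ) * (x ^ (k + 1) - (star x) ^ (k + 1)) := by
      rw [← self_add_star', mul_sub, mul_sub, add_mul, add_mul]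
      have h1 : star x * x ^ (k + 1 + 1) = ((normSq x : ℝ) : Quaternion ℝ) * x ^ (k+1) := by
        rw [pow_succ' x (k+1), ← mul_assoc, star_mul_self]
      have h2 : x * (star x) ^ (k + 1 + 1) =
          ((normSq x : ℝ) : Quaternion ℝ) * (star x) ^ (k+1) := by
        rw [pow_succ' (star x) (k+1), ← mul_assoc, self_mul_star]
      rw [h1, h2, pow_succ' x (k+2), pow_succ' (star x) (k+2)]
      abel
    rw [hrec, ih1, ih2, ← mul_assoc, ← mul_assoc, ← Quaternion.coe_mul, ← Quaternion.coe_mul, ← sub_mul, ← Quaternion.coe_sub]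
    congr 2
    rw [show ((k + 2 : ℕ) : ℤ) = (k : ℤ) + 2 by push_cast; ring, hU]
    simp only [eval_sub, eval_mul, eval_ofNat, eval_X]
    rw [normSq_eq_norm_mul_self]
    field_simp
    push_cast
    ring
/-- The spherical derivative of `x^m` equals the normalized zonal harmonic:
`(x^m)'ₛ = Z_{m-1}(x,1)/m` (stated for non-real `x` in the closed unit ball). -/
theorem sphericalDeriv_pow_eq_zonal (m : ℕ) (hm : 1 ≤ m) (x : Quaternion ℝ)
    (hx : x.im ≠ 0) (hx1 : ‖x‖ ≤ 1) :
    (x ^ m - (star x) ^ m) * (x - star x)⁻¹ =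
      ((zonalHarmonic4 (m - 1) x / m : ℝ) : Quaternion ℝ) := by
  have hx0 : x ≠ 0 := by
    intro h; apply hx; simp [h]
  have hsub : x - star x ≠ 0 := by
    intro h
    apply hx
    have heq := sub_eq_zero.mp h
    have him : x.im = (star x).im := by rw [← heq]
    rw [im_star] at him
    have h2 : (2 : ℝ) • x.im = 0 := by rw [two_smul]; nth_rewrite 2 [him]; simp
    simpa using h2
  obtain ⟨k, rfl⟩ : ∃ k, m = k + 1 := ⟨m - 1, (Nat.succ_pred_eq_of_pos hm).symm⟩
  rw [key_aux x hx0 k, mul_assoc, mul_inv_cancel₀ hsub, mul_one]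
  congr 1
  simp only [zonalHarmonic4, Nat.add_sub_cancel]
  push_cast
  field_simp

end
end

section
/- Uniqueness of the one-variable Almansi decomposition: let Ω ⊆ ℍ be a circular open set avoiding the real axis, and suppose h₁, h₂, g₁, g₂ : Ω → ℍ are circular functions (constant on each sphere S_{α,β} = {α + Jβ : J² = -1} contained in Ω) such that h₁(x) - x̄ h₂(x) = g₁(x) - x̄ g₂(x) for all x ∈ Ω. Then h₁ = g₁ and h₂ = g₂. -/
open Quaternion

/-- Uniqueness of the one-variable Almansi decomposition: on a circular open set
avoiding the real axis, circular functions `h₁, h₂, g₁, g₂` with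
`h₁(x) - x̄ h₂(x) = g₁(x) - x̄ g₂(x)` coincide: `h₁ = g₁` and `h₂ = g₂` on `Ω`. -/
theorem almansi_uniqueness (Ω : Set (Quaternion ℝ)) (hΩ : IsOpen Ω)
    (hcirc : ∀ (α β : ℝ) (J J' : Quaternion ℝ), J ^ 2 = -1 → J' ^ 2 = -1 →
      (α : Quaternion ℝ) + J * β ∈ Ω → (α : Quaternion ℝ) + J' * β ∈ Ω)
    (hreal : ∀ x ∈ Ω, x.im ≠ 0)
    (h₁ h₂ g₁ g₂ : Quaternion ℝ → Quaternion ℝ)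
    (hc : ∀ f ∈ [h₁, h₂, g₁, g₂], ∀ (α β : ℝ) (J J' : Quaternion ℝ),
      J ^ 2 = -1 → J' ^ 2 = -1 → (α : Quaternion ℝ) + J * β ∈ Ω →
        f ((α : Quaternion ℝ) + J * β) = f ((α : Quaternion ℝ) + J' * β))
    (heq : ∀ x ∈ Ω, h₁ x - star x * h₂ x = g₁ x - star x * g₂ x) :
    ∀ x ∈ Ω, h₁ x = g₁ x ∧ h₂ x = g₂ x := by
  intro x hx
  have him : x.im ≠ 0 := hreal x hx
  have hnorm : ‖x.im‖ ≠ 0 := norm_ne_zero_iff.mpr him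
  set α : ℝ := x.re with hα
  set β : ℝ := ‖x.im‖ with hβ
  set J : Quaternion ℝ := ‖x.im‖⁻¹ • x.im with hJ
  have hJsq : J ^ 2 = -1 := by
    have h1 := Quaternion.im_sq x
    have h2 : (Quaternion.normSq x.im : ℝ) = ‖x.im‖ * ‖x.im‖ :=
      Quaternion.normSq_eq_norm_mul_self x.im
    rw [hJ, smul_pow, h1, h2, smul_neg, ← Quaternion.coe_mul_eq_smul, neg_eq_iff_eq_neg,
      neg_neg, ← Quaternion.coe_mul, ← Quaternion.coe_one]
    congr 1
    field_simp
  have hJsq' : (-J) ^ 2 = -1 := by rw [neg_pow, hJsq]; norm_num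
  have hxeq : (α : Quaternion ℝ) + J * β = x := by
    rw [Quaternion.mul_coe_eq_smul, hJ, smul_smul, mul_inv_cancel₀ hnorm, one_smul]
    exact x.re_add_im
  have hx' : (α : Quaternion ℝ) + (-J) * β ∈ Ω :=
    hcirc α β J (-J) hJsq hJsq' (hxeq ▸ hx)
  set y : Quaternion ℝ := (α : Quaternion ℝ) + (-J) * β with hy
  have hfy : ∀ f ∈ [h₁, h₂, g₁, g₂], f x = f y := by
    intro f hf
    have := hc f hf α β J (-J) hJsq hJsq' (hxeq ▸ hx)
    rwa [hxeq] at this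
  have e1 := heq x hx
  have e2 := heq y hx'
  rw [← hfy h₁ (by simp), ← hfy h₂ (by simp), ← hfy g₁ (by simp), ← hfy g₂ (by simp)] at e2
  have h3 : h₁ x - g₁ x = star x * h₂ x - star x * g₂ x :=
    sub_eq_sub_iff_sub_eq_sub.mp e1
  have h4 : h₁ x - g₁ x = star y * h₂ x - star y * g₂ x :=
    sub_eq_sub_iff_sub_eq_sub.mp e2
  have hsub : (star y - star x) * (h₂ x - g₂ x) = 0 := by
    rw [sub_mul, mul_sub, mul_sub, sub_eq_zero]
    exact (h3.symm.trans h4).symm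
  have hsim : star x.im = -x.im := by ext <;> simp
  have hy2 : y = (α : Quaternion ℝ) - x.im := by
    rw [hy, Quaternion.mul_coe_eq_smul, smul_neg, hJ, smul_smul,
      mul_inv_cancel₀ hnorm, one_smul, sub_eq_add_neg]
  have hx2 : x = (α : Quaternion ℝ) + x.im := by
    rw [hα]; exact x.re_add_im.symm
  have hstary : star y = (α : Quaternion ℝ) + x.im := by
    rw [hy2, sub_eq_add_neg, star_add, star_neg, hsim, Quaternion.star_coe, neg_neg]
  have hstarx : star x = (α : Quaternion ℝ) - x.im := by
    conv_lhs => rw [hx2]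
    rw [star_add, hsim, Quaternion.star_coe, sub_eq_add_neg]
  have hyx : star y - star x = 2 * x.im := by
    rw [hstary, hstarx, two_mul]
    abel
  have h2ne : (2 : Quaternion ℝ) * x.im ≠ 0 := by
    refine mul_ne_zero ?_ him
    intro h
    have h2 : ((2 : ℝ) : Quaternion ℝ) = 0 := by push_cast; exact h
    have h3 : (2 : ℝ) = 0 := by
      have := congrArg QuaternionAlgebra.re h2
      simpa using this
    norm_num at h3
  rw [hyx] at hsub
  have hg2 : h₂ x = g₂ x := by
    rcases mul_eq_zero.mp hsub with h | h
    · exact absurd h h2ne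
    · exact sub_eq_zero.mp h
  refine ⟨?_, hg2⟩
  rw [hg2] at e1
  exact sub_left_inj.mp e1
end
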